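/- Suppose G is not bipartite (equivalently, G contains an odd cycle) and G has the infinite collision property. Then for every pair of vertices u and v, two independent simple random walks started at u and at v respectively collide at infinitely many times almost surely. -/

import Mathlib

open MeasureTheory
open scoped ENNReal Classical

namespace CollisionsStmt

variable {V : Type*}

/-- One-step transition probabilities of the simple random walk on `G`:
`p(u,v) = 1/deg u` if `v` is adjacent to `u`, and `0` otherwise. -/
noncomputable def step (G : SimpleGraph V) [G.LocallyFinite] (u v : V) : ℝ≥0∞ :=
  if G.Adj u v then ((G.degree u : ℝ≥0∞))⁻¹ else 0

/-- The `n`-step transition probabilities of the simple random walk on `G`. -/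
noncomputable def pn (G : SimpleGraph V) [G.LocallyFinite] : ℕ → V → V → ℝ≥0∞
  | 0, u, v => if u = v then 1 else 0
  | n + 1, u, v => ∑' w, step G u w * pn G n w v

/-- `μ` is the law (on path space, via the Ionescu–Tulcea trajectory construction) of
two independent walks with one-step transition probabilities `p`, started at `a` and `b`
respectively; equivalently, the Markov chain on `V × V` with kernel `p ⊗ p` started at `(a, b)`.
The law is characterized by being a probability measure with the prescribed
finite-dimensional (cylinder) distributions. -/
def IsPairWalkMeasure [MeasurableSpace V] (p : V → V → ℝ≥0∞) (a b : V)
    (μ : Measure (ℕ → V × V)) : Prop :=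
  IsProbabilityMeasure μ ∧
    ∀ (n : ℕ) (x : ℕ → V × V),
      μ {ω | ∀ i ≤ n, ω i = x i} =
        (if x 0 = (a, b) then (1 : ℝ≥0∞) else 0) *
          ∏ i ∈ Finset.range n, (p (x i).1 (x (i + 1)).1 * p (x i).2 (x (i + 1)).2)

/-- The event that the two walks do not collide at any time `n ≥ 1`. -/
def noCollision : Set (ℕ → V × V) := {ω | ∀ n ≥ 1, (ω n).1 ≠ (ω n).2}

/-- The event that the two walks have their last collision at the vertex `v`: for some
`n ≥ 0`, `X_n = Y_n = v` and `X_m ≠ Y_m` for all `m > n`. -/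
def lastCollisionAt (v : V) : Set (ℕ → V × V) :=
  {ω | ∃ n : ℕ, ω n = (v, v) ∧ ∀ m > n, (ω m).1 ≠ (ω m).2}

/-- The event that the two walks collide at only finitely many times. -/
def finCollisions : Set (ℕ → V × V) := {ω | {n : ℕ | (ω n).1 = (ω n).2}.Finite}

/-- The event that the two walks collide at infinitely many times. -/
def infCollisions : Set (ℕ → V × V) := {ω | {n : ℕ | (ω n).1 = (ω n).2}.Infinite}

/-- The event that the two walks never collide (including at time `0`). -/
def neverCollide : Set (ℕ → V × V) := {ω | ∀ n : ℕ, (ω n).1 ≠ (ω n).2}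

/-!
Let `h a b` be the probability that walks started at `a` and `b` collide infinitely often. This
event is invariant under the time shift, so the Markov property makes `h` harmonic for the product
chain: `h q = ∑' r, (p ⊗ p)(q, r) h r`. Since `h ≤ 1` and the weights sum to one, `h q = 1` forces
`h r = 1` for every `r` reachable from `q` in one step, hence along any pair of walks of the same
length. The infinite collision property gives `h u u = 1`, and because `G` is connected and has an
odd closed walk, there are a closed walk at `u` and a walk from `u` to `v` of the same length.
-/

section Walks

variable {G : SimpleGraph V}

lemma exists_bipartition_of_colorable_two (h : G.Colorable 2) :
    ∃ A : Set V, ∀ u v : V, G.Adj u v → (u ∈ A ↔ v ∉ A) := by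
  obtain ⟨c⟩ := h
  refine ⟨{x | c x = 0}, fun u v huv => ?_⟩
  have := c.valid huv
  show c u = 0 ↔ ¬ c v = 0
  omega

lemma exists_odd_loop (hconn : G.Connected) (h : ¬ G.Colorable 2) (u : V) :
    ∃ W : G.Walk u u, Odd W.length := by
  obtain ⟨w, W, hW⟩ : ∃ w, ∃ W : G.Walk w w, ¬ Even W.length := by
    simpa [SimpleGraph.two_colorable_iff_forall_loop_even] using h
  obtain ⟨P⟩ := hconn.preconnected u w
  refine ⟨P.append (W.append P.reverse), ?_⟩
  simp only [SimpleGraph.Walk.length_append, SimpleGraph.Walk.length_reverse]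
  grind

lemma exists_walk_length_add_two_mul {a b c : V} (hac : G.Adj a c) (W : G.Walk a b) (t : ℕ) :
    ∃ W' : G.Walk a b, W'.length = W.length + 2 * t := by
  induction t with
  | zero => exact ⟨W, rfl⟩
  | succ t ih =>
    obtain ⟨W', hW'⟩ := ih
    exact ⟨.cons hac (.cons hac.symm W'), by simp [hW']; ring⟩

lemma exists_loop_length_eq_of_odd {u c : V} (huc : G.Adj u c) {W : G.Walk u u}
    (hW : Odd W.length) {n : ℕ} (hn : W.length ≤ n) : ∃ W' : G.Walk u u, W'.length = n := by
  rcases Nat.even_or_odd n with ⟨t, rfl⟩ | hn'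
  · obtain ⟨W', h⟩ := exists_walk_length_add_two_mul huc .nil t
    exact ⟨W', by simp [h]; ring⟩
  · obtain ⟨t, ht⟩ : Even (n - W.length) := Nat.Odd.sub_odd hn' hW
    obtain ⟨W', h⟩ := exists_walk_length_add_two_mul huc W t
    exact ⟨W', by omega⟩

lemma exists_loop_and_walk_of_same_length [G.LocallyFinite] (hdeg : ∀ v : V, 0 < G.degree v)
    (hconn : G.Connected) (h : ¬ G.Colorable 2) (u v : V) :
    ∃ (W₁ : G.Walk u u) (W₂ : G.Walk u v), W₁.length = W₂.length := by
  obtain ⟨c, huc⟩ := (G.degree_pos_iff_exists_adj u).mp (hdeg u)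
  obtain ⟨W, hW⟩ := exists_odd_loop hconn h u
  obtain ⟨P⟩ := hconn.preconnected u v
  obtain ⟨W₂, hW₂⟩ := exists_walk_length_add_two_mul huc P W.length
  obtain ⟨W₁, hW₁⟩ := exists_loop_length_eq_of_odd huc hW (n := W₂.length) (by omega)
  exact ⟨W₁, W₂, hW₁⟩

end Walks

section PathSpace

variable {α : Type*}

def cylinder (n : ℕ) (x : ℕ → α) : Set (ℕ → α) := {ω | ∀ i ≤ n, ω i = x i}

def shift (ω : ℕ → α) : ℕ → α := fun n => ω (n + 1)

def consPath (q : α) (x : ℕ → α) : ℕ → α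
  | 0 => q
  | n + 1 => x n

lemma isPiSystem_cylinders : IsPiSystem {s : Set (ℕ → α) | ∃ n x, s = cylinder n x} := by
  have key {m n : ℕ} {x y : ℕ → α} (hmn : m ≤ n) (hne : (cylinder m x ∩ cylinder n y).Nonempty) :
      cylinder n y ⊆ cylinder m x := by
    obtain ⟨ω, hx, hy⟩ := hne
    intro τ hτ i hi
    rw [hτ i (hi.trans hmn), ← hy i (hi.trans hmn), hx i hi]
  rintro _ ⟨m, x, rfl⟩ _ ⟨n, y, rfl⟩ hne
  rcases le_total m n with h | h
  · exact ⟨n, y, Set.inter_eq_right.mpr (key h hne)⟩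
  · exact ⟨m, x, Set.inter_eq_left.mpr (key h (Set.inter_comm _ _ ▸ hne))⟩

lemma shift_preimage_cylinder (n : ℕ) (x : ℕ → α) :
    shift ⁻¹' cylinder n x = ⋃ q, cylinder (n + 1) (consPath q x) := by
  ext ω
  simp only [Set.mem_preimage, Set.mem_iUnion, cylinder, shift, Set.mem_ofPred_eq]
  constructor
  · intro h
    refine ⟨ω 0, fun i hi => ?_⟩
    cases i with
    | zero => rfl
    | succ j => exact h j (by omega)
  · rintro ⟨q, hq⟩ i hi
    exact hq (i + 1) (by omega)

lemma pairwise_disjoint_cylinder_consPath (n : ℕ) (x : ℕ → α) :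
    Pairwise (Function.onFun Disjoint fun q : α => cylinder (n + 1) (consPath q x)) := by
  intro q r hqr
  refine Set.disjoint_left.mpr fun ω hq hr => hqr ?_
  exact (hq 0 (Nat.zero_le _)).symm.trans (hr 0 (Nat.zero_le _))

variable [MeasurableSpace α]

lemma measurable_shift : Measurable (shift (α := α)) :=
  measurable_pi_lambda _ fun n => measurable_pi_apply (n + 1)

variable [DiscreteMeasurableSpace α]

lemma measurableSet_cylinder (n : ℕ) (x : ℕ → α) : MeasurableSet (cylinder n x) := by
  simp only [cylinder, Set.ofPred_forall]
  exact .iInter fun i => .iInter fun _ =>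
    (measurableSet_singleton (x i)).preimage (measurable_pi_apply i)

variable [Countable α]

lemma generateFrom_cylinders :
    MeasurableSpace.generateFrom {s : Set (ℕ → α) | ∃ n x, s = cylinder n x} =
      MeasurableSpace.pi := by
  refine le_antisymm (MeasurableSpace.generateFrom_le ?_) (iSup_le fun k => ?_)
  · rintro _ ⟨n, x, rfl⟩
    exact measurableSet_cylinder n x
  refine measurable_iff_comap_le.mp
    (@measurable_to_countable' _ _ _ _ (MeasurableSpace.generateFrom _) _ fun a => ?_)
  have hcover : (fun ω : ℕ → α => ω k) ⁻¹' {a} = ⋃₀ (cylinder k '' {x | x k = a}) := by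
    ext ω
    simp only [Set.mem_preimage, Set.mem_singleton_iff, Set.sUnion_image, Set.mem_iUnion]
    exact ⟨fun h => ⟨ω, h, fun i _ => rfl⟩, fun ⟨x, hx, hω⟩ => (hω k le_rfl).trans hx⟩
  have hcount : (cylinder k '' {x | x k = a}).Countable := by
    refine (Set.countable_range fun y : Fin (k + 1) → α => {ω | ∀ i, ω i = y i}).mono ?_
    rintro _ ⟨x, -, rfl⟩
    refine ⟨fun i => x i, Set.ext fun ω => ?_⟩
    simp [cylinder, Fin.forall_iff]
  rw [hcover]
  exact .sUnion hcount fun _ ⟨x, _, hx⟩ =>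
    hx ▸ MeasurableSpace.measurableSet_generateFrom ⟨k, x, rfl⟩

end PathSpace

section Collisions

lemma shift_preimage_infCollisions :
    shift ⁻¹' infCollisions = (infCollisions : Set (ℕ → V × V)) := by
  ext ω
  simp only [Set.mem_preimage, infCollisions, Set.mem_ofPred_eq,
    ← Nat.frequently_atTop_iff_infinite]
  conv_rhs => rw [← Filter.map_add_atTop_eq_nat 1, Filter.frequently_map]
  rfl

variable [MeasurableSpace V] [DiscreteMeasurableSpace V] [Countable V]

lemma measurableSet_infCollisions : MeasurableSet (infCollisions (V := V)) := by
  have h : infCollisions (V := V) = ⋂ N, ⋃ n ≥ N, {ω | (ω n).1 = (ω n).2} := by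
    ext ω
    simp [infCollisions, ← Nat.frequently_atTop_iff_infinite, Filter.frequently_atTop]
  rw [h]
  exact .iInter fun N => .iUnion fun n => .iUnion fun _ =>
    (Set.to_countable {q : V × V | q.1 = q.2}).measurableSet.preimage (measurable_pi_apply n)

end Collisions

section MarkovProperty

noncomputable def pairStep (p : V → V → ℝ≥0∞) (q r : V × V) : ℝ≥0∞ := p q.1 r.1 * p q.2 r.2

lemma tsum_pairStep {p : V → V → ℝ≥0∞} (hp : ∀ a, ∑' b, p a b = 1) (q : V × V) :
    ∑' r, pairStep p q r = 1 := by
  show ∑' r : V × V, p q.1 r.1 * p q.2 r.2 = 1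
  rw [ENNReal.tsum_prod (f := fun x y => p q.1 x * p q.2 y)]
  simp only [ENNReal.tsum_mul_left, hp, mul_one]

lemma eq_one_of_tsum_mul_eq_one {ι : Type*} {w f : ι → ℝ≥0∞} (hw : ∑' i, w i = 1)
    (hf : ∀ i, f i ≤ 1) (h : ∑' i, w i * f i = 1) {i : ι} (hi : w i ≠ 0) : f i = 1 := by
  by_contra hne
  have hwi : w i ≠ ∞ := ne_top_of_le_ne_top ENNReal.one_ne_top (hw ▸ ENNReal.le_tsum i)
  have hlt : w i * f i < w i :=
    ((ENNReal.mul_lt_mul_iff_right hi hwi).mpr ((hf i).lt_of_ne hne)).trans_eq (mul_one _)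
  have := ENNReal.tsum_lt_tsum (h ▸ ENNReal.one_ne_top)
    (fun j => (mul_le_mul_right (hf j) _).trans_eq (mul_one _)) hlt
  simp only [h, hw, lt_self_iff_false] at this

variable [MeasurableSpace V] {p : V → V → ℝ≥0∞}

lemma IsPairWalkMeasure.measure_cylinder {a b : V} {ν : Measure (ℕ → V × V)}
    (h : IsPairWalkMeasure p a b ν) (n : ℕ) (x : ℕ → V × V) :
    ν (cylinder n x) =
      (if x 0 = (a, b) then 1 else 0) * ∏ i ∈ Finset.range n, pairStep p (x i) (x (i + 1)) :=
  h.2 n x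

variable [DiscreteMeasurableSpace V] [Countable V] {μ : V → V → Measure (ℕ → V × V)}

theorem map_shift_eq_sum (hp : ∀ a, ∑' b, p a b = 1)
    (hμ : ∀ a b, IsPairWalkMeasure p a b (μ a b)) (a b : V) :
    (μ a b).map shift = Measure.sum fun q : V × V => pairStep p (a, b) q • μ q.1 q.2 := by
  have := (hμ a b).1
  refine ext_of_generate_finite _ generateFrom_cylinders.symm isPiSystem_cylinders ?_ ?_
  · rintro _ ⟨n, x, rfl⟩
    rw [Measure.map_apply measurable_shift (measurableSet_cylinder n x),
      Measure.sum_apply _ (measurableSet_cylinder n x), shift_preimage_cylinder,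
      measure_iUnion (pairwise_disjoint_cylinder_consPath n x) fun q => measurableSet_cylinder _ _]
    simp only [Measure.smul_apply, smul_eq_mul, (hμ _ _).measure_cylinder,
      Finset.prod_range_succ']
    rw [tsum_eq_single (a, b) fun q hq => by simp [consPath, hq],
      tsum_eq_single (x 0) fun q hq => by simp [Ne.symm hq]]
    simp [consPath, mul_comm]
  · have := fun q : V × V => (hμ q.1 q.2).1
    simp [Measure.map_apply measurable_shift MeasurableSet.univ, tsum_pairStep hp]

theorem measure_eq_tsum_of_shift_invariant (hp : ∀ a, ∑' b, p a b = 1)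
    (hμ : ∀ a b, IsPairWalkMeasure p a b (μ a b)) {B : Set (ℕ → V × V)} (hB : MeasurableSet B)
    (hinv : shift ⁻¹' B = B) (a b : V) :
    μ a b B = ∑' q : V × V, pairStep p (a, b) q * μ q.1 q.2 B := by
  conv_lhs => rw [← hinv, ← Measure.map_apply measurable_shift hB, map_shift_eq_sum hp hμ]
  simp [Measure.sum_apply _ hB]

theorem measure_eq_one_of_pairStep_ne_zero (hp : ∀ a, ∑' b, p a b = 1)
    (hμ : ∀ a b, IsPairWalkMeasure p a b (μ a b)) {B : Set (ℕ → V × V)} (hB : MeasurableSet B)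
    (hinv : shift ⁻¹' B = B) {q r : V × V} (hq : μ q.1 q.2 B = 1) (hqr : pairStep p q r ≠ 0) :
    μ r.1 r.2 B = 1 :=
  eq_one_of_tsum_mul_eq_one (tsum_pairStep hp q) (fun r => have := (hμ r.1 r.2).1; prob_le_one)
    ((measure_eq_tsum_of_shift_invariant hp hμ hB hinv q.1 q.2).symm.trans hq) hqr

end MarkovProperty

section SimpleRandomWalk

variable {G : SimpleGraph V} [G.LocallyFinite]

lemma step_ne_zero {u v : V} (h : G.Adj u v) : step G u v ≠ 0 := by
  simp [step, h]

lemma tsum_step (hdeg : ∀ v : V, 0 < G.degree v) (u : V) : ∑' v, step G u v = 1 := by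
  rw [tsum_eq_sum (s := G.neighborFinset u) fun v hv => by simp_all [step],
    Finset.sum_congr rfl fun v hv =>
      show step G u v = (G.degree u : ℝ≥0∞)⁻¹ from if_pos ((G.mem_neighborFinset u v).mp hv),
    Finset.sum_const, nsmul_eq_mul, G.card_neighborFinset_eq_degree]
  exact ENNReal.mul_inv_cancel (by exact_mod_cast (hdeg u).ne') (ENNReal.natCast_ne_top _)

variable [MeasurableSpace V] [DiscreteMeasurableSpace V] [Countable V]
  {μ : V → V → Measure (ℕ → V × V)}

theorem measure_eq_one_of_walks (hdeg : ∀ v : V, 0 < G.degree v)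
    (hμ : ∀ a b, IsPairWalkMeasure (step G) a b (μ a b)) {B : Set (ℕ → V × V)}
    (hB : MeasurableSet B) (hinv : shift ⁻¹' B = B) {a a' b b' : V} (W₁ : G.Walk a a')
    (W₂ : G.Walk b b') (hlen : W₁.length = W₂.length) (h : μ a b B = 1) : μ a' b' B = 1 := by
  induction W₁ generalizing b with
  | nil => cases W₂ with
    | nil => exact h
    | cons => simp at hlen
  | cons hac W₁ ih => cases W₂ with
    | nil => simp at hlen
    | cons hbd W₂ =>
      refine ih W₂ (by simpa using hlen) ?_
      exact measure_eq_one_of_pairStep_ne_zero (tsum_step hdeg) hμ hB hinv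
        (q := (_, _)) (r := (_, _)) h (mul_ne_zero (step_ne_zero hac) (step_ne_zero hbd))

end SimpleRandomWalk

/-- if `G` is not bipartite and has the infinite collision property, then
two independent walks started at any two vertices collide infinitely often a.s. -/
theorem nonbipartite_collision_from_any_starts
    [Countable V] [MeasurableSpace V] [DiscreteMeasurableSpace V]
    (G : SimpleGraph V) [G.LocallyFinite]
    (hconn : G.Connected) (hdeg : ∀ v : V, 0 < G.degree v)
    (hnotbip : ¬ ∃ A : Set V, ∀ u v : V, G.Adj u v → (u ∈ A ↔ v ∉ A))
    (μ : V → V → Measure (ℕ → V × V))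
    (hμ : ∀ a b : V, IsPairWalkMeasure (step G) a b (μ a b))
    (hICP : ∀ w : V, μ w w infCollisions = 1)
    (u v : V) :
    μ u v infCollisions = 1 := by
  have hcol : ¬ G.Colorable 2 := fun h => hnotbip (exists_bipartition_of_colorable_two h)
  obtain ⟨W₁, W₂, hlen⟩ := exists_loop_and_walk_of_same_length hdeg hconn hcol u v
  exact measure_eq_one_of_walks hdeg hμ measurableSet_infCollisions shift_preimage_infCollisions
    W₁ W₂ hlen (hICP u)
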